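/- Let M = (S, A, T, R) be a finite MDP with rewards in [0, Rmax], let φ : S → S̄ be a state abstraction, and let M̄ = (S̄, A, T̄, R̄) be an abstract MDP such that for all s̄, s̄' ∈ S̄, all s ∈ S with φ(s) = s̄, and all a ∈ A: |T̄(s̄'|s̄,a) − Σ_{s'∈φ⁻¹(s̄')} T(s'|s,a)| ≤ η_T and |R̄(s̄,a) − R(s,a)| ≤ η_R. Then for every horizon h ≥ 1 and every s ∈ S: |V^{*,h}_M(s) − V̄^{*,h}_{M̄}(φ(s))| ≤ h·η_R + ((h−1)·h/2)·η_T·|S̄|·Rmax, where V^{*,h}_M is the h-step optimal value of M and V̄^{*,h}_{M̄} is the h-step optimal value of M̄. -/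
import Mathlib

noncomputable def Vopt {S A : Type*} [Fintype S] [Fintype A] [Nonempty A]
    (T : S → A → S → ℝ) (R : S → A → ℝ) : ℕ → S → ℝ
  | 0, _ => 0
  | n + 1, s => Finset.univ.sup' Finset.univ_nonempty
      (fun a => R s a + ∑ s' : S, T s a s' * Vopt T R n s')

lemma abs_sup'_sub_sup'_le {α : Type*} [Fintype α] (hne : (Finset.univ : Finset α).Nonempty)
    (f g : α → ℝ) (c : ℝ) (hc : ∀ a, |f a - g a| ≤ c) :
    |Finset.univ.sup' hne f - Finset.univ.sup' hne g| ≤ c := by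
  rw [abs_sub_le_iff]
  constructor <;> rw [sub_le_iff_le_add] <;> apply Finset.sup'_le <;> intro a _
  · have := (abs_sub_le_iff.mp (hc a)).1
    calc f a ≤ g a + c := by linarith
      _ ≤ _ := by have := Finset.le_sup' g (Finset.mem_univ a); linarith
  · have := (abs_sub_le_iff.mp (hc a)).2
    calc g a ≤ f a + c := by linarith
      _ ≤ _ := by have := Finset.le_sup' f (Finset.mem_univ a); linarith

lemma Vopt_bounds {S A : Type*} [Fintype S] [Fintype A] [Nonempty A]
    (T : S → A → S → ℝ) (R : S → A → ℝ) (Rmax : ℝ)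
    (hT0 : ∀ s a s', 0 ≤ T s a s') (hT1 : ∀ s a, ∑ s', T s a s' = 1)
    (hR0 : ∀ s a, 0 ≤ R s a) (hR1 : ∀ s a, R s a ≤ Rmax) :
    ∀ n s, 0 ≤ Vopt T R n s ∧ Vopt T R n s ≤ n * Rmax := by
  intro n
  induction n with
  | zero => intro s; simp [Vopt]
  | succ n ih =>
    intro s
    constructor
    · obtain ⟨a⟩ := ‹Nonempty A›
      refine le_trans ?_ (Finset.le_sup' _ (Finset.mem_univ a))
      have : 0 ≤ ∑ s' : S, T s a s' * Vopt T R n s' :=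
        Finset.sum_nonneg fun s' _ => mul_nonneg (hT0 s a s') (ih s').1
      have := hR0 s a; linarith
    · apply Finset.sup'_le
      intro a _
      have h1 : ∑ s' : S, T s a s' * Vopt T R n s' ≤ ∑ s' : S, T s a s' * (n * Rmax) := by
        apply Finset.sum_le_sum; intro s' _
        exact mul_le_mul_of_nonneg_left (ih s').2 (hT0 s a s')
      rw [← Finset.sum_mul, hT1 s a, one_mul] at h1
      have := hR1 s a
      push_cast
      linarith

theorem stmt6 {S Sb A : Type*} [Fintype S] [Fintype Sb] [Fintype A]
    [Nonempty S] [Nonempty Sb] [Nonempty A] [DecidableEq Sb]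
    -- the ground MDP M = (S, A, T, R), rewards in [0, Rmax]
    (T : S → A → S → ℝ) (R : S → A → ℝ) (Rmax : ℝ) (hRmax : 0 < Rmax)
    (hT0 : ∀ s a s', 0 ≤ T s a s') (hT1 : ∀ s a, ∑ s', T s a s' = 1)
    (hR0 : ∀ s a, 0 ≤ R s a) (hR1 : ∀ s a, R s a ≤ Rmax)
    -- the state abstraction φ : S → Sb
    (φ : S → Sb) (hφ : Function.Surjective φ)
    -- the abstract MDP M̄ = (Sb, A, Tb, Rb)
    (Tb : Sb → A → Sb → ℝ) (Rb : Sb → A → ℝ)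
    (hTb0 : ∀ sb a sb', 0 ≤ Tb sb a sb') (hTb1 : ∀ sb a, ∑ sb', Tb sb a sb' = 1)
    (hRb0 : ∀ sb a, 0 ≤ Rb sb a) (hRb1 : ∀ sb a, Rb sb a ≤ Rmax)
    -- approximate model similarity between M and M̄
    (ηT ηR : ℝ)
    (hsimT : ∀ s a sb', |Tb (φ s) a sb' -
      ∑ s' ∈ Finset.univ.filter (fun s' => φ s' = sb'), T s a s'| ≤ ηT)
    (hsimR : ∀ s a, |Rb (φ s) a - R s a| ≤ ηR)
    -- any horizon h ≥ 1
    (h : ℕ) (hh : 1 ≤ h) (s : S) :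
    |Vopt T R h s - Vopt Tb Rb h (φ s)|
      ≤ (h : ℝ) * ηR + (((h : ℝ) - 1) * (h : ℝ) / 2) * ηT * (Fintype.card Sb : ℝ) * Rmax := by
  clear hh
  have hVb := Vopt_bounds Tb Rb Rmax hTb0 hTb1 hRb0 hRb1
  induction h generalizing s with
  | zero => simp [Vopt]
  | succ n ih =>
    set K : ℝ := ηT * (Fintype.card Sb : ℝ) * Rmax with hK
    have key : ∀ a : A,
        |(R s a + ∑ s' : S, T s a s' * Vopt T R n s') -
          (Rb (φ s) a + ∑ sb' : Sb, Tb (φ s) a sb' * Vopt Tb Rb n sb')|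
        ≤ ηR + ((n : ℝ) * ηR + (((n : ℝ) - 1) * (n : ℝ) / 2) * ηT * (Fintype.card Sb : ℝ) * Rmax)
            + (n : ℝ) * K := by
      intro a
      set Bn : ℝ := (n : ℝ) * ηR + (((n : ℝ) - 1) * (n : ℝ) / 2) * ηT * (Fintype.card Sb : ℝ) * Rmax
        with hBn
      have hR' := hsimR s a
      -- split ground sum by fibers
      have hfib : ∑ s' : S, T s a s' * Vopt T R n s'
          = ∑ sb' : Sb, ∑ s' ∈ Finset.univ.filter (fun s' => φ s' = sb'),
              T s a s' * Vopt T R n s' :=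
        (Finset.sum_fiberwise Finset.univ φ _).symm
      have hsum : |(∑ s' : S, T s a s' * Vopt T R n s')
          - ∑ sb' : Sb, Tb (φ s) a sb' * Vopt Tb Rb n sb'| ≤ Bn + (n : ℝ) * K := by
        rw [hfib, ← Finset.sum_sub_distrib]
        refine le_trans (Finset.abs_sum_le_sum_abs _ _) ?_
        have hterm : ∀ sb' : Sb,
            |(∑ s' ∈ Finset.univ.filter (fun s' => φ s' = sb'), T s a s' * Vopt T R n s')
              - Tb (φ s) a sb' * Vopt Tb Rb n sb'|
            ≤ (∑ s' ∈ Finset.univ.filter (fun s' => φ s' = sb'), T s a s') * Bn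
              + ηT * ((n : ℝ) * Rmax) := by
          intro sb'
          set p : ℝ := ∑ s' ∈ Finset.univ.filter (fun s' => φ s' = sb'), T s a s' with hp
          have hηT : 0 ≤ ηT := le_trans (abs_nonneg _) (hsimT s a sb')
          have hfirst : |∑ s' ∈ Finset.univ.filter (fun s' => φ s' = sb'),
              T s a s' * (Vopt T R n s' - Vopt Tb Rb n sb')| ≤ p * Bn := by
            refine le_trans (Finset.abs_sum_le_sum_abs _ _) ?_
            rw [hp, Finset.sum_mul]
            refine Finset.sum_le_sum ?_
            intro s' hs'
            have hφs' : φ s' = sb' := (Finset.mem_filter.mp hs').2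
            rw [abs_mul, abs_of_nonneg (hT0 s a s')]
            refine mul_le_mul_of_nonneg_left ?_ (hT0 s a s')
            rw [← hφs']
            exact ih s'
          have hsecond : |(p - Tb (φ s) a sb') * Vopt Tb Rb n sb'| ≤ ηT * ((n : ℝ) * Rmax) := by
            rw [abs_mul]
            refine mul_le_mul ?_ ?_ (abs_nonneg _) hηT
            · rw [abs_sub_comm]; exact hsimT s a sb'
            · rw [abs_of_nonneg (hVb n sb').1]; exact (hVb n sb').2
          have hdec : (∑ s' ∈ Finset.univ.filter (fun s' => φ s' = sb'),
                T s a s' * Vopt T R n s') - Tb (φ s) a sb' * Vopt Tb Rb n sb'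
              = (∑ s' ∈ Finset.univ.filter (fun s' => φ s' = sb'),
                  T s a s' * (Vopt T R n s' - Vopt Tb Rb n sb'))
                + (p - Tb (φ s) a sb') * Vopt Tb Rb n sb' := by
            simp only [mul_sub, Finset.sum_sub_distrib, ← Finset.sum_mul, ← hp]
            ring
          rw [hdec]
          exact le_trans (abs_add_le _ _) (add_le_add hfirst hsecond)
        refine le_trans (Finset.sum_le_sum fun sb' _ => hterm sb') ?_
        rw [Finset.sum_add_distrib, ← Finset.sum_mul,
          Finset.sum_fiberwise Finset.univ φ (fun s' => T s a s'), hT1, one_mul,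
          Finset.sum_const, Finset.card_univ, nsmul_eq_mul]
        rw [hK]
        apply le_of_eq
        ring
      calc |(R s a + ∑ s' : S, T s a s' * Vopt T R n s') -
          (Rb (φ s) a + ∑ sb' : Sb, Tb (φ s) a sb' * Vopt Tb Rb n sb')|
          ≤ |R s a - Rb (φ s) a| + |(∑ s' : S, T s a s' * Vopt T R n s')
              - ∑ sb' : Sb, Tb (φ s) a sb' * Vopt Tb Rb n sb'| := by
            rw [add_sub_add_comm]; exact abs_add_le _ _
        _ ≤ ηR + (Bn + (n : ℝ) * K) := by
            have : |R s a - Rb (φ s) a| ≤ ηR := by rw [abs_sub_comm]; exact hR'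
            linarith
        _ = _ := by ring
    have main := abs_sup'_sub_sup'_le Finset.univ_nonempty _ _ _ key
    refine le_trans main (le_of_eq ?_)
    push_cast
    rw [hK]
    ring
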